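/- Let t = (t₁,t₂,t₃) ∈ ℕ³, k = t₁+t₂+t₃+2, and let w ≥ k be an integer. Define the exact swap toll e_n = ((t₁+1)/(k+1))·(n−k) + ((t₁+t₂+2)(t₃+1)/((k+1)(k+2)))·(n−k−1) + (t₃+1)/(k+1) for n > w. Then any sequence (S_n) with arbitrary fixed values for n ≤ w and S_n = e_n + Σ_{j=0}^{n−2} w_{n,j}·S_j for n > w satisfies S_n / (n·ln n) → a_S / H(t) as n → ∞, where a_S = (t₁+1)/(k+1) + (t₁+t₂+2)(t₃+1)/((k+1)(k+2)). -/

import Mathlib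

open Finset Filter Real Asymptotics

/-- The `n`-th harmonic number `H_n = ∑_{i=1}^n 1/i`. -/
noncomputable def harm (n : ℕ) : ℝ := ∑ i ∈ Finset.range n, (1 : ℝ) / (i + 1)

/-- The discrete entropy `H(t)` of `t = (t₁,t₂,t₃)` with `k = t₁+t₂+t₃+2`. -/
noncomputable def Hdisc (t1 t2 t3 : ℕ) : ℝ :=
  ((t1 : ℝ) + 1) / ((t1 : ℝ) + t2 + t3 + 3) * (harm (t1 + t2 + t3 + 3) - harm (t1 + 1))
  + ((t2 : ℝ) + 1) / ((t1 : ℝ) + t2 + t3 + 3) * (harm (t1 + t2 + t3 + 3) - harm (t2 + 1))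
  + ((t3 : ℝ) + 1) / ((t1 : ℝ) + t2 + t3 + 3) * (harm (t1 + t2 + t3 + 3) - harm (t3 + 1))

/-- Rising factorial `a^{(m)} = a (a+1) ⋯ (a+m−1)`. -/
def ascNat (a m : ℕ) : ℕ := ∏ i ∈ Finset.range m, (a + i)

/-- `π_l(N, i) = binom(N,i) (t+1)^{(i)} (k−t)^{(N−i)} / (k+1)^{(N)}` for `0 ≤ i ≤ N`, else `0`. -/
noncomputable def piw (t k N : ℕ) (i : ℤ) : ℝ :=
  if 0 ≤ i ∧ i ≤ (N : ℤ) then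
    (N.choose i.toNat : ℝ) * (ascNat (t + 1) i.toNat : ℝ)
      * (ascNat (k - t) (N - i.toNat) : ℝ) / (ascNat (k + 1) N : ℝ)
  else 0

/-- The recurrence weights `w_{n,j} = ∑_{l=1}^3 π_l(n−k, j−t_l)`. -/
noncomputable def wgt (t1 t2 t3 n j : ℕ) : ℝ :=
  piw t1 (t1 + t2 + t3 + 2) (n - (t1 + t2 + t3 + 2)) ((j : ℤ) - t1)
  + piw t2 (t1 + t2 + t3 + 2) (n - (t1 + t2 + t3 + 2)) ((j : ℤ) - t2)
  + piw t3 (t1 + t2 + t3 + 2) (n - (t1 + t2 + t3 + 2)) ((j : ℤ) - t3)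

open scoped Topology

/-!
The weight `w_{n,·}` is a mixture of three shifted beta-binomial (Pólya urn) laws, whose
moments are explicit: `∑ⱼ w_{n,j} (j+1) = n+1` and
`∑ⱼ w_{n,j} (j+1) H_{j+1} = (n+1) (H_{n+1} - H(t))`.
Hence `T n = α (n+1) H_{n+1} + c` with `α = a_S / H(t)` solves the recurrence exactly for a
suitable constant `c`. The difference `S - T` solves the homogeneous recurrence; its weights are
nonnegative and preserve `n + 1`, so by strong induction `|S n - T n| ≤ M (n+1)`. Finally
`(n+1) H_{n+1} = n ln n + O(n)`.
-/

lemma harm_eq_harmonic (n : ℕ) : harm n = harmonic n := by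
  simp [harm, harmonic, one_div]

lemma harm_succ (n : ℕ) : harm (n + 1) = harm n + 1 / ((n : ℝ) + 1) :=
  sum_range_succ _ n

lemma succ_mul_harm_succ (n : ℕ) : ((n : ℝ) + 1) * harm (n + 1) = (n + 1) * harm n + 1 := by
  rw [harm_succ]; field_simp

lemma harm_strictMono : StrictMono harm :=
  strictMono_nat_of_lt_succ fun n => by
    rw [harm_succ]
    exact lt_add_of_pos_right _ (by positivity)

lemma succ_mul_harm_succ_sub_isBigO :
    (fun n : ℕ => ((n : ℝ) + 1) * harm (n + 1) - n * log n) =O[atTop] fun n => (n : ℝ) := by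
  refine IsBigO.of_bound 4 ?_
  filter_upwards [eventually_ge_atTop 1] with n hn
  have hn' : (1 : ℝ) ≤ n := by exact_mod_cast hn
  have hlower : log n ≤ harm n := by
    rw [harm_eq_harmonic]
    calc log n ≤ log ↑(n + 1) := log_le_log (by positivity) (by push_cast; linarith)
      _ ≤ harmonic n := log_add_one_le_harmonic n
  have hupper : harm n ≤ 1 + log n := by
    rw [harm_eq_harmonic]; exact harmonic_le_one_add_log n
  have hlog_le : log n ≤ n := (log_le_sub_one_of_pos (by positivity)).trans (by linarith)
  have hlog_nonneg : 0 ≤ log n := log_nonneg hn'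
  rw [succ_mul_harm_succ, Real.norm_eq_abs, Real.norm_of_nonneg (by positivity), abs_le]
  have hn1 : (0 : ℝ) ≤ n + 1 := by positivity
  constructor <;>
    nlinarith [mul_le_mul_of_nonneg_left hupper hn1, mul_le_mul_of_nonneg_left hlower hn1]

lemma tendsto_div_mul_log_of_sub_isBigO {S : ℕ → ℝ} {α : ℝ}
    (h : (fun n : ℕ => S n - α * (n * log n)) =O[atTop] fun n => (n : ℝ)) :
    Tendsto (fun n : ℕ => S n / (n * log n)) atTop (𝓝 α) := by
  have hlog : (fun _ : ℕ => (1 : ℝ)) =o[atTop] fun n : ℕ => log n :=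
    isLittleO_const_log_atTop.comp_tendsto tendsto_natCast_atTop_atTop
  have hlin : (fun n : ℕ => (n : ℝ)) =o[atTop] fun n : ℕ => n * log n := by
    simpa using (isBigO_refl (fun n : ℕ => (n : ℝ)) atTop).mul_isLittleO hlog
  have hrem := (h.trans_isLittleO hlin).tendsto_div_nhds_zero
  have hlim := hrem.add_const α
  rw [zero_add] at hlim
  refine hlim.congr' ?_
  filter_upwards [eventually_ge_atTop 2] with n hn
  have hn' : (1 : ℝ) < n := by exact_mod_cast hn
  have : (n : ℝ) * log n ≠ 0 := (mul_pos (by linarith) (log_pos hn')).ne'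
  rw [sub_div, mul_div_assoc, div_self this, mul_one, sub_add_cancel]

lemma ascNat_eq_ascFactorial (a m : ℕ) : ascNat a m = a.ascFactorial m :=
  (Nat.ascFactorial_eq_prod_range a m).symm

/-- Unnormalised beta-binomial weight: divided by `(a + b).ascFactorial N` it is the probability
of `i` white draws out of `N` from a Pólya urn started with `a` white and `b` black balls. -/
noncomputable def polyaWeight (a b N i : ℕ) : ℝ :=
  (N.choose i : ℝ) * (a.ascFactorial i : ℝ) * (b.ascFactorial (N - i) : ℝ)

lemma polyaWeight_of_lt {a b N i : ℕ} (h : N < i) : polyaWeight a b N i = 0 := by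
  simp [polyaWeight, Nat.choose_eq_zero_of_lt h]

lemma polyaWeight_succ_zero (a b N : ℕ) :
    polyaWeight a b (N + 1) 0 = polyaWeight a b N 0 * ((b : ℝ) + N) := by
  simp [polyaWeight, Nat.ascFactorial_succ, mul_comm]

lemma polyaWeight_succ_succ {a b N i : ℕ} (hi : i ≤ N) :
    polyaWeight a b (N + 1) (i + 1)
      = polyaWeight a b N (i + 1) * ((b : ℝ) + N - (i + 1))
        + polyaWeight a b N i * ((a : ℝ) + i) := by
  rcases hi.eq_or_lt with rfl | hi
  · rw [polyaWeight_of_lt (Nat.lt_succ_self i), zero_mul, zero_add]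
    simp only [polyaWeight, Nat.choose_self, Nat.sub_self, Nat.ascFactorial_succ]
    push_cast
    ring
  · obtain ⟨m, rfl⟩ := Nat.exists_eq_add_of_lt hi
    have h1 : i + m + 1 + 1 - (i + 1) = m + 1 := by omega
    have h2 : i + m + 1 - (i + 1) = m := by omega
    have h3 : i + m + 1 - i = m + 1 := by omega
    simp only [polyaWeight, Nat.choose_succ_succ, h1, h2, h3, Nat.ascFactorial_succ]
    push_cast
    ring

-- Condition on the last draw: after `i` white draws out of `N` the urn holds `a + i` white and
-- `b + N - i` black balls.
lemma sum_polyaWeight_succ_mul (a b N : ℕ) (φ : ℕ → ℝ) :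
    ∑ i ∈ range (N + 2), polyaWeight a b (N + 1) i * φ i
      = ∑ i ∈ range (N + 1), polyaWeight a b N i
          * (((b : ℝ) + N - i) * φ i + ((a : ℝ) + i) * φ (i + 1)) := by
  have hshift :=
    sum_range_succ' (fun i => polyaWeight a b N i * (((b : ℝ) + N - i) * φ i)) (N + 1)
  rw [sum_range_succ, polyaWeight_of_lt (Nat.lt_succ_self N)] at hshift
  rw [sum_range_succ', polyaWeight_succ_zero,
    sum_congr rfl fun i hi => by rw [polyaWeight_succ_succ (Nat.lt_succ_iff.mp (mem_range.mp hi))]]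
  simp only [add_mul, mul_add, sum_add_distrib, mul_assoc] at hshift ⊢
  push_cast at hshift
  linarith

lemma sum_polyaWeight (a b N : ℕ) :
    ∑ i ∈ range (N + 1), polyaWeight a b N i = ((a + b).ascFactorial N : ℝ) := by
  induction N with
  | zero => simp [polyaWeight]
  | succ N ih =>
    have h := sum_polyaWeight_succ_mul a b N fun _ => 1
    simp only [mul_one] at h
    simp_rw [h, show ∀ i : ℕ, (b : ℝ) + N - i + (a + i) = a + b + N from fun i => by ring,
      ← sum_mul, ih, Nat.ascFactorial_succ]
    push_cast
    ring

lemma polyaWeight_mul_add (a b N i : ℕ) :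
    polyaWeight a b N i * ((i : ℝ) + a) = a * polyaWeight (a + 1) b N i := by
  have h := congrArg (Nat.cast : ℕ → ℝ) (Nat.succ_ascFactorial a i)
  push_cast at h
  unfold polyaWeight
  linear_combination -(N.choose i : ℝ) * (b.ascFactorial (N - i) : ℝ) * h

lemma sum_polyaWeight_mul_add (a b N : ℕ) :
    ∑ i ∈ range (N + 1), polyaWeight a b N i * ((i : ℝ) + a)
      = a * ((a + b + 1).ascFactorial N : ℝ) := by
  simp_rw [polyaWeight_mul_add, ← mul_sum, sum_polyaWeight, add_right_comm a 1 b]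

lemma sum_polyaWeight_mul_harm (a b N : ℕ) :
    ∑ i ∈ range (N + 1), polyaWeight (a + 1) b N i * harm (a + i)
      = ((a + b + 1).ascFactorial N : ℝ) * (harm a + harm (a + b + N) - harm (a + b)) := by
  induction N with
  | zero => simp [polyaWeight]
  | succ N ih =>
    have hstep : ∀ i : ℕ,
        ((b : ℝ) + N - i) * harm (a + i) + (((a + 1 : ℕ) : ℝ) + i) * harm (a + (i + 1))
          = ((a : ℝ) + b + N + 1) * harm (a + i) + 1 := fun i => by
      have h := succ_mul_harm_succ (a + i)
      push_cast at h ⊢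
      linear_combination h
    rw [sum_polyaWeight_succ_mul, sum_congr rfl fun i _ => by rw [hstep]]
    simp only [mul_add, mul_one, sum_add_distrib, mul_left_comm _ ((a : ℝ) + b + N + 1),
      ← mul_sum, ih, sum_polyaWeight, Nat.ascFactorial_succ, ← add_assoc, harm_succ]
    have : (a : ℝ) + b + N + 1 ≠ 0 := by positivity
    rw [add_right_comm a 1 b]
    push_cast
    field_simp
    ring

lemma piw_natCast {t k N i : ℕ} (hi : i ≤ N) :
    piw t k N i = polyaWeight (t + 1) (k - t) N i / ((k + 1).ascFactorial N : ℝ) := by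
  rw [piw, if_pos ⟨Int.natCast_nonneg i, by exact_mod_cast hi⟩, Int.toNat_natCast, polyaWeight]
  simp only [ascNat_eq_ascFactorial]

lemma sum_piw_mul {t k n : ℕ} (ht : t + 2 ≤ k) (hn : k ≤ n) (φ : ℕ → ℝ) :
    ∑ j ∈ range (n - 1), piw t k (n - k) (j - t) * φ j
      = (∑ i ∈ range (n - k + 1), polyaWeight (t + 1) (k - t) (n - k) i * φ (t + i))
          / ((k + 1).ascFactorial (n - k) : ℝ) := by
  have hsub : Ico t (t + (n - k + 1)) ⊆ range (n - 1) := by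
    intro j hj
    simp only [mem_Ico, mem_range] at hj ⊢
    omega
  have hvanish : ∀ j ∈ range (n - 1), j ∉ Ico t (t + (n - k + 1)) →
      piw t k (n - k) (j - t) * φ j = 0 := by
    intro j _ hj
    simp only [mem_Ico, not_and, not_lt] at hj
    rw [piw, if_neg (by omega), zero_mul]
  rw [← sum_subset hsub hvanish, sum_Ico_eq_sum_range, Nat.add_sub_cancel_left, sum_div]
  refine sum_congr rfl fun i hi => ?_
  rw [Nat.cast_add, add_sub_cancel_left, piw_natCast (by simpa [Nat.lt_succ_iff] using hi),
    div_mul_eq_mul_div]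

lemma sum_piw {t k n : ℕ} (ht : t + 2 ≤ k) (hn : k ≤ n) :
    ∑ j ∈ range (n - 1), piw t k (n - k) (j - t) = 1 := by
  have h := sum_piw_mul ht hn fun _ => 1
  simp only [mul_one] at h
  rw [h, sum_polyaWeight, show t + 1 + (k - t) = k + 1 by omega,
    div_self (by positivity)]

lemma succ_mul_ascFactorial_add_two {k n : ℕ} (hn : k ≤ n) :
    ((k : ℝ) + 1) * ((k + 2).ascFactorial (n - k) : ℝ)
      = ((n : ℝ) + 1) * ((k + 1).ascFactorial (n - k) : ℝ) := by
  have h := congrArg (Nat.cast : ℕ → ℝ) (Nat.succ_ascFactorial (k + 1) (n - k))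
  rw [show k + 1 + (n - k) = n + 1 by omega] at h
  exact_mod_cast h

lemma sum_piw_mul_succ {t k n : ℕ} (ht : t + 2 ≤ k) (hn : k ≤ n) :
    ∑ j ∈ range (n - 1), piw t k (n - k) (j - t) * ((j : ℝ) + 1)
      = ((t : ℝ) + 1) * (n + 1) / (k + 1) := by
  have hφ : ∀ i : ℕ, ((t + i : ℕ) : ℝ) + 1 = i + (t + 1 : ℕ) := fun i => by
    push_cast; ring
  simp_rw [sum_piw_mul ht hn, hφ, sum_polyaWeight_mul_add,
    show t + 1 + (k - t) + 1 = k + 2 by omega]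
  have h := succ_mul_ascFactorial_add_two hn
  have : ((k + 1).ascFactorial (n - k) : ℝ) ≠ 0 := by positivity
  field_simp
  push_cast
  linear_combination ((t : ℝ) + 1) * h

lemma sum_piw_mul_harm {t k n : ℕ} (ht : t + 2 ≤ k) (hn : k ≤ n) :
    ∑ j ∈ range (n - 1), piw t k (n - k) (j - t) * (((j : ℝ) + 1) * harm (j + 1))
      = ((t : ℝ) + 1) * (n + 1) / (k + 1) * (harm (t + 1) + harm (n + 1) - harm (k + 1)) := by
  have hφ : ∀ i : ℕ,
      polyaWeight (t + 1) (k - t) (n - k) i * ((((t + i : ℕ) : ℝ) + 1) * harm (t + i + 1))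
        = (t + 1 : ℕ) * (polyaWeight (t + 1 + 1) (k - t) (n - k) i * harm (t + 1 + i)) :=
    fun i => by
    rw [← mul_assoc, show ((t + i : ℕ) : ℝ) + 1 = i + (t + 1 : ℕ) by push_cast; ring,
      polyaWeight_mul_add, show t + i + 1 = t + 1 + i by omega]
    ring
  simp_rw [sum_piw_mul ht hn, hφ, ← mul_sum, sum_polyaWeight_mul_harm,
    show t + 1 + (k - t) + 1 = k + 2 by omega, show t + 1 + (k - t) + (n - k) = n + 1 by omega,
    show t + 1 + (k - t) = k + 1 by omega]
  have h := succ_mul_ascFactorial_add_two hn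
  have : ((k + 1).ascFactorial (n - k) : ℝ) ≠ 0 := by positivity
  field_simp
  push_cast
  linear_combination ((t : ℝ) + 1) * (harm (t + 1) + harm (n + 1) - harm (k + 1)) * h

lemma wgt_nonneg (t1 t2 t3 n j : ℕ) : 0 ≤ wgt t1 t2 t3 n j := by
  have hpiw : ∀ t k N i, 0 ≤ piw t k N i := fun t k N i => by
    unfold piw; split_ifs <;> positivity
  unfold wgt
  linarith [hpiw t1 (t1 + t2 + t3 + 2) (n - (t1 + t2 + t3 + 2)) (j - t1),
    hpiw t2 (t1 + t2 + t3 + 2) (n - (t1 + t2 + t3 + 2)) (j - t2),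
    hpiw t3 (t1 + t2 + t3 + 2) (n - (t1 + t2 + t3 + 2)) (j - t3)]

section Moments

variable {t1 t2 t3 n : ℕ}

lemma sum_wgt_mul (φ : ℕ → ℝ) :
    ∑ j ∈ range (n - 1), wgt t1 t2 t3 n j * φ j
      = ∑ j ∈ range (n - 1), piw t1 (t1 + t2 + t3 + 2) (n - (t1 + t2 + t3 + 2)) (j - t1) * φ j
        + ∑ j ∈ range (n - 1),
            piw t2 (t1 + t2 + t3 + 2) (n - (t1 + t2 + t3 + 2)) (j - t2) * φ j
        + ∑ j ∈ range (n - 1),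
            piw t3 (t1 + t2 + t3 + 2) (n - (t1 + t2 + t3 + 2)) (j - t3) * φ j := by
  simp only [wgt, add_mul, sum_add_distrib]

lemma sum_wgt (hn : t1 + t2 + t3 + 2 ≤ n) : ∑ j ∈ range (n - 1), wgt t1 t2 t3 n j = 3 := by
  simp only [wgt, sum_add_distrib]
  rw [sum_piw (by omega) hn, sum_piw (by omega) hn, sum_piw (by omega) hn]
  norm_num

lemma sum_wgt_mul_succ (hn : t1 + t2 + t3 + 2 ≤ n) :
    ∑ j ∈ range (n - 1), wgt t1 t2 t3 n j * ((j : ℝ) + 1) = n + 1 := by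
  rw [sum_wgt_mul, sum_piw_mul_succ (by omega) hn, sum_piw_mul_succ (by omega) hn,
    sum_piw_mul_succ (by omega) hn]
  field_simp
  push_cast
  ring

lemma sum_wgt_mul_harm (hn : t1 + t2 + t3 + 2 ≤ n) :
    ∑ j ∈ range (n - 1), wgt t1 t2 t3 n j * (((j : ℝ) + 1) * harm (j + 1))
      = ((n : ℝ) + 1) * (harm (n + 1) - Hdisc t1 t2 t3) := by
  rw [sum_wgt_mul, sum_piw_mul_harm (by omega) hn, sum_piw_mul_harm (by omega) hn,
    sum_piw_mul_harm (by omega) hn, Hdisc]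
  field_simp
  push_cast
  ring

end Moments

lemma Hdisc_pos (t1 t2 t3 : ℕ) : 0 < Hdisc t1 t2 t3 := by
  have hterm : ∀ t, t + 1 < t1 + t2 + t3 + 3 →
      0 < ((t : ℝ) + 1) / (t1 + t2 + t3 + 3) * (harm (t1 + t2 + t3 + 3) - harm (t + 1)) :=
    fun t ht => mul_pos (by positivity) (sub_pos.mpr (harm_strictMono ht))
  unfold Hdisc
  linarith [hterm t1 (by omega), hterm t2 (by omega), hterm t3 (by omega)]

lemma isBigO_natCast_of_homogeneous_rec {p : ℕ → ℕ → ℝ} {D : ℕ → ℝ} {w : ℕ}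
    (hp : ∀ n j, 0 ≤ p n j)
    (hp_succ : ∀ n, w < n → ∑ j ∈ range (n - 1), p n j * ((j : ℝ) + 1) = n + 1)
    (hD : ∀ n, w < n → D n = ∑ j ∈ range (n - 1), p n j * D j) :
    D =O[atTop] fun n => (n : ℝ) := by
  set M := ∑ j ∈ range (w + 1), |D j|
  have hM : 0 ≤ M := sum_nonneg fun j _ => abs_nonneg _
  have hbound : ∀ n, |D n| ≤ M * ((n : ℝ) + 1) := by
    intro n
    induction n using Nat.strong_induction_on with
    | _ n ih =>
      rcases le_or_gt n w with hn | hn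
      · have hle : |D n| ≤ M :=
          single_le_sum (f := fun j => |D j|) (fun j _ => abs_nonneg _) (mem_range.2 (by omega))
        nlinarith [(by positivity : (0 : ℝ) ≤ n)]
      · calc |D n| = |∑ j ∈ range (n - 1), p n j * D j| := by rw [hD n hn]
          _ ≤ ∑ j ∈ range (n - 1), |p n j * D j| := abs_sum_le_sum_abs _ _
          _ ≤ ∑ j ∈ range (n - 1), p n j * (M * ((j : ℝ) + 1)) := by
            refine sum_le_sum fun j hj => ?_
            rw [abs_mul, abs_of_nonneg (hp n j)]
            exact mul_le_mul_of_nonneg_left (ih j (by rw [mem_range] at hj; omega)) (hp n j)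
          _ = M * ((n : ℝ) + 1) := by
            rw [← hp_succ n hn, mul_sum]
            exact sum_congr rfl fun j _ => by ring
  refine IsBigO.of_bound (2 * M) ?_
  filter_upwards [eventually_ge_atTop 1] with n hn
  have hn' : (1 : ℝ) ≤ n := by exact_mod_cast hn
  rw [Real.norm_eq_abs, Real.norm_of_nonneg (by positivity)]
  nlinarith [hbound n]

/-- The swap-count recurrence of Generalized Yaroslavskiy Quicksort:
its solution satisfies `S_n / (n ln n) → a_S / H(t)`. -/
theorem stmt2 (t1 t2 t3 w k : ℕ) (hk : k = t1 + t2 + t3 + 2) (hw : k ≤ w)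
    (S : ℕ → ℝ)
    (hrec : ∀ n : ℕ, w < n →
      S n = ((t1 : ℝ) + 1) / ((k : ℝ) + 1) * ((n : ℝ) - k)
          + ((t1 : ℝ) + t2 + 2) * ((t3 : ℝ) + 1) / (((k : ℝ) + 1) * ((k : ℝ) + 2))
              * ((n : ℝ) - k - 1)
          + ((t3 : ℝ) + 1) / ((k : ℝ) + 1)
          + ∑ j ∈ Finset.range (n - 1), wgt t1 t2 t3 n j * S j) :
    Tendsto (fun n : ℕ => S n / ((n : ℝ) * Real.log n)) atTop
      (nhds ((((t1 : ℝ) + 1) / ((k : ℝ) + 1)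
              + ((t1 : ℝ) + t2 + 2) * ((t3 : ℝ) + 1) / (((k : ℝ) + 1) * ((k : ℝ) + 2)))
            / Hdisc t1 t2 t3)) := by
  have hkn : ∀ n, w < n → t1 + t2 + t3 + 2 ≤ n := fun n hn => hk ▸ hw.trans hn.le
  have hHd := (Hdisc_pos t1 t2 t3).ne'
  set α := (((t1 : ℝ) + 1) / ((k : ℝ) + 1)
    + ((t1 : ℝ) + t2 + 2) * ((t3 : ℝ) + 1) / (((k : ℝ) + 1) * ((k : ℝ) + 2)))
      / Hdisc t1 t2 t3
  set c := (((t1 : ℝ) + 1) + ((t1 : ℝ) + t2 + 1) * ((t3 : ℝ) + 1) / ((k : ℝ) + 1)) / 2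
  set T : ℕ → ℝ := fun m => α * (((m : ℝ) + 1) * harm (m + 1)) + c
  have hD : ∀ n, w < n →
      S n - T n = ∑ j ∈ range (n - 1), wgt t1 t2 t3 n j * (S j - T j) := by
    intro n hn
    have hT : ∑ j ∈ range (n - 1), wgt t1 t2 t3 n j * T j
        = α * (((n : ℝ) + 1) * (harm (n + 1) - Hdisc t1 t2 t3)) + c * 3 := by
      rw [← sum_wgt_mul_harm (hkn n hn), ← sum_wgt (hkn n hn), mul_sum, mul_sum,
        ← sum_add_distrib]
      exact sum_congr rfl fun j _ => by ring
    simp only [mul_sub, sum_sub_distrib]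
    rw [hrec n hn, hT]
    subst hk
    simp only [T, α, c]
    field_simp
    push_cast
    ring
  have hDO := isBigO_natCast_of_homogeneous_rec (wgt_nonneg t1 t2 t3)
    (fun n hn => sum_wgt_mul_succ (hkn n hn)) hD
  have hc : (fun _ : ℕ => c) =O[atTop] fun n => (n : ℝ) :=
    ((isLittleO_const_id_atTop c).comp_tendsto tendsto_natCast_atTop_atTop).isBigO
  refine tendsto_div_mul_log_of_sub_isBigO
    (((hDO.add (succ_mul_harm_succ_sub_isBigO.const_mul_left α)).add hc).congr_left fun n => ?_)
  simp only [T]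
  ring
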